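/- Let S̃ and S̃_p be n×n real symmetric matrices with ‖S̃‖₂ ≤ 1 and ‖S̃_p‖₂ ≤ 1, set E = S̃_p − S̃. Let X⁽⁰⁾ be a real n×d matrix with ‖X⁽⁰⁾‖_F = √d (each of its d columns has unit Euclidean norm), let Θ⁽¹⁾,…,Θ⁽ᴸ⁾ be real d×d matrices, and define recursively X⁽ˡ⁾ = σ(S̃ X⁽ˡ⁻¹⁾ Θ⁽ˡ⁾) and X_p⁽ˡ⁾ = σ(S̃_p X_p⁽ˡ⁻¹⁾ Θ⁽ˡ⁾) with X_p⁽⁰⁾ = X⁽⁰⁾, where σ is entrywise ReLU. Then ‖X⁽ᴸ⁾ − X_p⁽ᴸ⁾‖_F ≤ √d · L · ‖E‖₂ · Π_{l=1}^{L} ‖Θ⁽ˡ⁾‖₂. -/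

import Mathlib

open Matrix


/-- The operator norm of a real matrix induced by the Euclidean vector norm. -/
noncomputable def opNorm {m n : Type*} [Fintype m] [Fintype n] [DecidableEq n]
    (M : Matrix m n ℝ) : ℝ :=
  ‖LinearMap.toContinuousLinearMap (Matrix.toEuclideanLin M)‖

/-- The Frobenius norm of a real matrix. -/
noncomputable def frobNorm {m n : Type*} [Fintype m] [Fintype n]
    (M : Matrix m n ℝ) : ℝ :=
  Real.sqrt (∑ i, ∑ j, (M i j) ^ 2)

/-- Entrywise ReLU applied to a matrix. -/
def reluM {m n : Type*} (M : Matrix m n ℝ) : Matrix m n ℝ :=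
  Matrix.of fun i j => max (M i j) 0

set_option linter.unusedSectionVars false

section Op
open scoped Matrix.Norms.L2Operator
variable {m n p : Type*} [Fintype m] [Fintype n] [Fintype p] [DecidableEq n] [DecidableEq m]

lemma opNorm_eq_norm (M : Matrix m n ℝ) : opNorm M = ‖M‖ := rfl

lemma opNorm_nonneg (M : Matrix m n ℝ) : 0 ≤ opNorm M := norm_nonneg (E := Matrix m n ℝ) M

lemma opNorm_sub_rev (A B : Matrix m n ℝ) : opNorm (A - B) = opNorm (B - A) := by
  simp only [opNorm_eq_norm]; exact norm_sub_rev (E := Matrix m n ℝ) A B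

lemma opNorm_transpose (M : Matrix m n ℝ) : opNorm Mᵀ = opNorm M := by
  have h : Mᵀ = Mᴴ := by ext i j; simp [Matrix.conjTranspose]
  rw [h, opNorm_eq_norm, opNorm_eq_norm]
  exact Matrix.l2_opNorm_conjTranspose M

lemma mulVec_sq_bound (M : Matrix m n ℝ) (v : n → ℝ) :
    ∑ i, (M.mulVec v i) ^ 2 ≤ opNorm M ^ 2 * ∑ j, (v j) ^ 2 := by
  have hx : ‖((WithLp.equiv 2 (n → ℝ)).symm v : EuclideanSpace ℝ n)‖
      = Real.sqrt (∑ j, (v j) ^ 2) := by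
    rw [EuclideanSpace.norm_eq]
    congr 1
    exact Finset.sum_congr rfl fun j _ => by simp [Real.norm_eq_abs, sq_abs]
  have h := Matrix.l2_opNorm_mulVec M ((WithLp.equiv 2 (n → ℝ)).symm v)
  rw [hx] at h
  have h' : Real.sqrt (∑ i, (M.mulVec v i) ^ 2) ≤ opNorm M * Real.sqrt (∑ j, (v j) ^ 2) := by
    refine le_trans (le_of_eq ?_) h
    rw [EuclideanSpace.norm_eq]
    congr 1
    exact Finset.sum_congr rfl fun i _ => by
      simp only [Real.norm_eq_abs, sq_abs]
      rfl
  have h2 := pow_le_pow_left₀ (Real.sqrt_nonneg _) h' 2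
  rwa [Real.sq_sqrt (Finset.sum_nonneg fun i _ => sq_nonneg _), mul_pow,
    Real.sq_sqrt (Finset.sum_nonneg fun j _ => sq_nonneg _)] at h2

end Op

section Frob
variable {m n p : Type*} [Fintype m] [Fintype n] [Fintype p]

lemma frobNorm_nonneg (M : Matrix m n ℝ) : 0 ≤ frobNorm M := Real.sqrt_nonneg _

lemma frobNorm_mono {A B : Matrix m n ℝ} (h : ∀ i j, (A i j) ^ 2 ≤ (B i j) ^ 2) :
    frobNorm A ≤ frobNorm B :=
  Real.sqrt_le_sqrt (Finset.sum_le_sum fun i _ => Finset.sum_le_sum fun j _ => h i j)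

lemma frobNorm_transpose (M : Matrix m n ℝ) : frobNorm Mᵀ = frobNorm M := by
  rw [frobNorm, frobNorm, Finset.sum_comm]
  rfl

lemma frobNorm_eq_norm (M : Matrix m n ℝ) :
    frobNorm M = ‖((WithLp.equiv 2 ((m × n) → ℝ)).symm (fun q => M q.1 q.2) :
      EuclideanSpace ℝ (m × n))‖ := by
  rw [EuclideanSpace.norm_eq, frobNorm, Fintype.sum_prod_type]
  congr 1
  exact Finset.sum_congr rfl fun q _ => by simp [Real.norm_eq_abs, sq_abs]

lemma frobNorm_add_le (A B : Matrix m n ℝ) : frobNorm (A + B) ≤ frobNorm A + frobNorm B := by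
  rw [frobNorm_eq_norm, frobNorm_eq_norm, frobNorm_eq_norm]
  have := norm_add_le (E := EuclideanSpace ℝ (m × n))
    ((WithLp.equiv 2 ((m × n) → ℝ)).symm (fun q => A q.1 q.2))
    ((WithLp.equiv 2 ((m × n) → ℝ)).symm (fun q => B q.1 q.2))
  refine le_trans (le_of_eq ?_) this
  congr 1

lemma frobNorm_mul_left [DecidableEq m] [DecidableEq n] [DecidableEq p] (M : Matrix m n ℝ) (A : Matrix n p ℝ) :
    frobNorm (M * A) ≤ opNorm M * frobNorm A := by
  have key : ∑ i, ∑ j, ((M * A) i j) ^ 2 ≤ opNorm M ^ 2 * ∑ i, ∑ j, (A i j) ^ 2 := by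
    rw [Finset.sum_comm]
    calc ∑ j, ∑ i, ((M * A) i j) ^ 2
        ≤ ∑ j, opNorm M ^ 2 * ∑ k, (A k j) ^ 2 := by
          refine Finset.sum_le_sum fun j _ => ?_
          have h := mulVec_sq_bound M (fun k => A k j)
          refine le_trans (le_of_eq ?_) h
          exact Finset.sum_congr rfl fun i _ => by
            simp [Matrix.mul_apply, Matrix.mulVec, dotProduct]
      _ = opNorm M ^ 2 * ∑ i, ∑ j, (A i j) ^ 2 := by
          rw [← Finset.mul_sum, Finset.sum_comm]
  calc frobNorm (M * A) ≤ Real.sqrt (opNorm M ^ 2 * ∑ i, ∑ j, (A i j) ^ 2) :=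
        Real.sqrt_le_sqrt key
    _ = opNorm M * frobNorm A := by
        rw [Real.sqrt_mul (sq_nonneg _), Real.sqrt_sq (opNorm_nonneg M), frobNorm]

lemma frobNorm_mul_right [DecidableEq m] [DecidableEq n] [DecidableEq p] (A : Matrix m n ℝ) (Θ : Matrix n p ℝ) :
    frobNorm (A * Θ) ≤ frobNorm A * opNorm Θ := by
  have h : (A * Θ)ᵀ = Θᵀ * Aᵀ := Matrix.transpose_mul A Θ
  calc frobNorm (A * Θ) = frobNorm (Θᵀ * Aᵀ) := by rw [← h, frobNorm_transpose]
    _ ≤ opNorm Θᵀ * frobNorm Aᵀ := frobNorm_mul_left _ _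
    _ = frobNorm A * opNorm Θ := by rw [opNorm_transpose, frobNorm_transpose, mul_comm]

lemma frob_relu_sub (A B : Matrix m n ℝ) :
    frobNorm (reluM A - reluM B) ≤ frobNorm (A - B) := by
  refine frobNorm_mono fun i j => ?_
  have h : |max (A i j) 0 - max (B i j) 0| ≤ |A i j - B i j| := abs_max_sub_max_le_abs _ _ _
  calc ((reluM A - reluM B) i j) ^ 2 = |max (A i j) 0 - max (B i j) 0| ^ 2 := by
        rw [sq_abs]; rfl
    _ ≤ |A i j - B i j| ^ 2 := pow_le_pow_left₀ (abs_nonneg _) h 2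
    _ = ((A - B) i j) ^ 2 := by rw [sq_abs]; rfl

lemma frob_relu_le (A : Matrix m n ℝ) : frobNorm (reluM A) ≤ frobNorm A := by
  refine frobNorm_mono fun i j => ?_
  have h : |max (A i j) 0| ≤ |A i j| := by
    rw [abs_of_nonneg (le_max_right _ _)]
    exact max_le (le_abs_self _) (abs_nonneg _)
  calc (reluM A i j) ^ 2 = |max (A i j) 0| ^ 2 := by rw [sq_abs]; rfl
    _ ≤ |A i j| ^ 2 := pow_le_pow_left₀ (abs_nonneg _) h 2
    _ = (A i j) ^ 2 := sq_abs _

end Frob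


/-- Proposition 3: stability of the multilayer GCN.  For symmetric `S̃, S̃_p` of operator
norm at most `1`, with `E = S̃_p − S̃`, `‖X⁽⁰⁾‖_F = √d`, and GCN layers
`X⁽ˡ⁾ = σ(S̃ X⁽ˡ⁻¹⁾ Θ⁽ˡ⁾)`, `X_p⁽ˡ⁾ = σ(S̃_p X_p⁽ˡ⁻¹⁾ Θ⁽ˡ⁾)`, the outputs satisfy
`‖X⁽ᴸ⁾ − X_p⁽ᴸ⁾‖_F ≤ √d L ‖E‖₂ Π_{l=1}^L ‖Θ⁽ˡ⁾‖₂`. -/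
theorem stmt14 {n d : ℕ} (S Sp : Matrix (Fin n) (Fin n) ℝ)
    (hSs : S.IsSymm) (hSps : Sp.IsSymm)
    (hS : opNorm S ≤ 1) (hSp : opNorm Sp ≤ 1)
    (L : ℕ) (Θ : ℕ → Matrix (Fin d) (Fin d) ℝ)
    (X Xp : ℕ → Matrix (Fin n) (Fin d) ℝ)
    (hX0 : frobNorm (X 0) = Real.sqrt d) (hXp0 : Xp 0 = X 0)
    (hrec : ∀ l < L, X (l + 1) = reluM (S * X l * Θ (l + 1)))
    (hrecp : ∀ l < L, Xp (l + 1) = reluM (Sp * Xp l * Θ (l + 1))) :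
    frobNorm (X L - Xp L) ≤
      Real.sqrt d * (L : ℝ) * opNorm (Sp - S) * ∏ l ∈ Finset.Icc 1 L, opNorm (Θ l) := by
  set P : ℕ → ℝ := fun l => ∏ i ∈ Finset.Icc 1 l, opNorm (Θ i) with hPdef
  have hPnn : ∀ l, 0 ≤ P l := fun l => Finset.prod_nonneg fun i _ => opNorm_nonneg _
  have hPsucc : ∀ l, P (l + 1) = P l * opNorm (Θ (l + 1)) := fun l =>
    Finset.prod_Icc_succ_top (Nat.succ_le_succ (Nat.zero_le l)) _
  have hEnn : 0 ≤ opNorm (Sp - S) := opNorm_nonneg _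
  have hdnn : (0 : ℝ) ≤ Real.sqrt d := Real.sqrt_nonneg _
  -- bound on ‖Xp l‖_F
  have hXpb : ∀ l, l ≤ L → frobNorm (Xp l) ≤ Real.sqrt d * P l := by
    intro l
    induction l with
    | zero => intro _; simp [hXp0, hX0, hPdef]
    | succ l ih =>
      intro h
      have hl : l < L := by omega
      have ihl := ih (le_of_lt hl)
      rw [hrecp l hl]
      calc frobNorm (reluM (Sp * Xp l * Θ (l + 1)))
          ≤ frobNorm (Sp * Xp l * Θ (l + 1)) := frob_relu_le _
        _ ≤ frobNorm (Sp * Xp l) * opNorm (Θ (l + 1)) := frobNorm_mul_right _ _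
        _ ≤ (opNorm Sp * frobNorm (Xp l)) * opNorm (Θ (l + 1)) :=
            mul_le_mul_of_nonneg_right (frobNorm_mul_left _ _) (opNorm_nonneg _)
        _ ≤ (1 * (Real.sqrt d * P l)) * opNorm (Θ (l + 1)) := by
            refine mul_le_mul_of_nonneg_right ?_ (opNorm_nonneg _)
            exact mul_le_mul hSp ihl (frobNorm_nonneg _) zero_le_one
        _ = Real.sqrt d * P (l + 1) := by rw [hPsucc]; ring
  -- main difference bound
  have hmain : ∀ l, l ≤ L →
      frobNorm (X l - Xp l) ≤ Real.sqrt d * (l : ℝ) * opNorm (Sp - S) * P l := by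
    intro l
    induction l with
    | zero => intro _; simp [hXp0, frobNorm]
    | succ l ih =>
      intro h
      have hl : l < L := by omega
      have ihl := ih (le_of_lt hl)
      rw [hrec l hl, hrecp l hl]
      have decomp : S * X l * Θ (l + 1) - Sp * Xp l * Θ (l + 1)
          = S * (X l - Xp l) * Θ (l + 1) + (S - Sp) * Xp l * Θ (l + 1) := by
        simp only [Matrix.mul_sub, Matrix.sub_mul]; abel
      have t1 : frobNorm (S * (X l - Xp l) * Θ (l + 1))
          ≤ (Real.sqrt d * (l : ℝ) * opNorm (Sp - S) * P l) * opNorm (Θ (l + 1)) := by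
        calc frobNorm (S * (X l - Xp l) * Θ (l + 1))
            ≤ frobNorm (S * (X l - Xp l)) * opNorm (Θ (l + 1)) := frobNorm_mul_right _ _
          _ ≤ (opNorm S * frobNorm (X l - Xp l)) * opNorm (Θ (l + 1)) :=
              mul_le_mul_of_nonneg_right (frobNorm_mul_left _ _) (opNorm_nonneg _)
          _ ≤ (1 * (Real.sqrt d * (l : ℝ) * opNorm (Sp - S) * P l)) * opNorm (Θ (l + 1)) := by
              refine mul_le_mul_of_nonneg_right ?_ (opNorm_nonneg _)
              refine mul_le_mul hS ihl (frobNorm_nonneg _) zero_le_one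
          _ = (Real.sqrt d * (l : ℝ) * opNorm (Sp - S) * P l) * opNorm (Θ (l + 1)) := by
              ring
      have t2 : frobNorm ((S - Sp) * Xp l * Θ (l + 1))
          ≤ (opNorm (Sp - S) * (Real.sqrt d * P l)) * opNorm (Θ (l + 1)) := by
        calc frobNorm ((S - Sp) * Xp l * Θ (l + 1))
            ≤ frobNorm ((S - Sp) * Xp l) * opNorm (Θ (l + 1)) := frobNorm_mul_right _ _
          _ ≤ (opNorm (S - Sp) * frobNorm (Xp l)) * opNorm (Θ (l + 1)) :=
              mul_le_mul_of_nonneg_right (frobNorm_mul_left _ _) (opNorm_nonneg _)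
          _ ≤ (opNorm (Sp - S) * (Real.sqrt d * P l)) * opNorm (Θ (l + 1)) := by
              refine mul_le_mul_of_nonneg_right ?_ (opNorm_nonneg _)
              rw [opNorm_sub_rev]
              exact mul_le_mul_of_nonneg_left (hXpb l (le_of_lt hl)) hEnn
      calc frobNorm (reluM (S * X l * Θ (l + 1)) - reluM (Sp * Xp l * Θ (l + 1)))
          ≤ frobNorm (S * X l * Θ (l + 1) - Sp * Xp l * Θ (l + 1)) := frob_relu_sub _ _
        _ = frobNorm (S * (X l - Xp l) * Θ (l + 1) + (S - Sp) * Xp l * Θ (l + 1)) := by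
            rw [decomp]
        _ ≤ frobNorm (S * (X l - Xp l) * Θ (l + 1)) + frobNorm ((S - Sp) * Xp l * Θ (l + 1)) :=
            frobNorm_add_le _ _
        _ ≤ (Real.sqrt d * (l : ℝ) * opNorm (Sp - S) * P l) * opNorm (Θ (l + 1))
            + (opNorm (Sp - S) * (Real.sqrt d * P l)) * opNorm (Θ (l + 1)) := add_le_add t1 t2
        _ = Real.sqrt d * ((l : ℝ) + 1) * opNorm (Sp - S) * P (l + 1) := by
            rw [hPsucc]; ring
        _ = Real.sqrt d * ((l + 1 : ℕ) : ℝ) * opNorm (Sp - S) * P (l + 1) := by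
            push_cast; ring
  exact hmain L le_rfl
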